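/- arXiv:2311.12073 — 2 statements merged into one kernel-verified Lean document; each statement's English description precedes it below -/
import Mathlib

section
/- As formal power series over 𝔽₂ (i.e., modulo 2), q·∏_{n=1}^∞ (1-q^n)^{24} ≡ ∑_{n=0}^∞ q^{(2n+1)^2}. Equivalently, the coefficient of q^m in q∏(1-q^n)^{24} is odd if and only if m is an odd square. -/
/-!
Modulo 2, `(1 - q ^ n) ^ 24 = (1 + q ^ (8 * n)) ^ 3`, and `m = (2 * j + 1) ^ 2` iff
`m = 8 * T j + 1` with `T j = j * (j + 1) / 2`; so it suffices that `∏ n ≥ 1, (1 + q ^ n) ^ 3`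
is congruent to `∑ j, q ^ T j` modulo 2.

With `A_t = ∏ n ∈ [1, t], (1 + q ^ n)`, the q-binomial theorem for
`∏ i < 2 * t + 1, (q ^ t + q ^ i)` produces `2 * q ^ c * A_t ^ 2` on one side and, after pairing
the terms `k` and `2 * t + 1 - k`, twice a sum on the other. Cancelling gives the finite Gauss
identity `A_t ^ 2 = ∑ k + j = t, q ^ T j * [2 * t + 1, k]_q`. In characteristic 2 the product
formula `[k + l, k]_q * A_k = ∏ i ∈ [l + 1, l + k], (1 + q ^ i)` makes `[2 * t + 1, k]_q * A_t`
congruent to `1` modulo `q ^ (k + 1)`, and `T j + k ≥ t`, so `A_t ^ 3 ≡ ∑ j, q ^ T j` modulo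
`q ^ (t + 1)`.
-/

open Finset Polynomial

section QBinomial

variable {R : Type*} [CommRing R]

def qBinomial (q : R) : ℕ → ℕ → R
  | _, 0 => 1
  | 0, _ + 1 => 0
  | n + 1, k + 1 => qBinomial q n k + q ^ (k + 1) * qBinomial q n (k + 1)

@[simp] lemma qBinomial_zero_right (q : R) (n : ℕ) : qBinomial q n 0 = 1 := by cases n <;> rfl

@[simp] lemma qBinomial_zero_succ (q : R) (k : ℕ) : qBinomial q 0 (k + 1) = 0 := rfl

lemma qBinomial_succ_succ (q : R) (n k : ℕ) :
    qBinomial q (n + 1) (k + 1) = qBinomial q n k + q ^ (k + 1) * qBinomial q n (k + 1) := rfl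

lemma qBinomial_eq_zero_of_lt (q : R) {n k : ℕ} (h : n < k) : qBinomial q n k = 0 := by
  induction n generalizing k with
  | zero => obtain ⟨k, rfl⟩ := Nat.exists_eq_succ_of_ne_zero h.ne'; rfl
  | succ n ih =>
    obtain ⟨k, rfl⟩ := Nat.exists_eq_succ_of_ne_zero (by omega : k ≠ 0)
    rw [qBinomial_succ_succ, ih (by omega), ih (by omega), mul_zero, add_zero]

@[simp] lemma qBinomial_self (q : R) (n : ℕ) : qBinomial q n n = 1 := by
  induction n with
  | zero => rfl
  | succ n ih =>
    rw [qBinomial_succ_succ, ih, qBinomial_eq_zero_of_lt q n.lt_succ_self, mul_zero, add_zero]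

@[simp] lemma map_qBinomial {S F : Type*} [CommRing S] [FunLike F R S] [RingHomClass F R S]
    (f : F) (q : R) (n k : ℕ) : f (qBinomial q n k) = qBinomial (f q) n k := by
  induction n generalizing k with
  | zero => cases k <;> simp
  | succ n ih => cases k <;> simp [qBinomial_succ_succ, ih]

lemma qBinomial_add_mul_prod (q : R) (k l : ℕ) :
    qBinomial q (k + l) k * ∏ i ∈ range k, (1 - q ^ (i + 1)) =
      ∏ i ∈ range k, (1 - q ^ (l + i + 1)) := by
  induction k generalizing l with
  | zero => simp
  | succ k ihk =>
    induction l with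
    | zero => simp
    | succ l ihl =>
      have hG : qBinomial q (k + 1 + (l + 1)) (k + 1) =
          qBinomial q (k + (l + 1)) k + q ^ (k + 1) * qBinomial q (k + 1 + l) (k + 1) := by
        rw [show k + 1 + (l + 1) = k + (l + 1) + 1 by ring, qBinomial_succ_succ,
          show k + (l + 1) = k + 1 + l by ring]
      set Q := ∏ i ∈ range k, (1 - q ^ (l + 1 + i + 1))
      have hQ : ∏ i ∈ range (k + 1), (1 - q ^ (l + i + 1)) = Q * (1 - q ^ (l + 1)) := by
        rw [prod_range_succ']
        simp only [Q, add_assoc, add_zero, add_comm 1]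
      rw [hQ, prod_range_succ (fun i => 1 - q ^ (i + 1))] at ihl
      rw [prod_range_succ, prod_range_succ, hG]
      linear_combination (1 - q ^ (k + 1)) * ihk (l + 1) + q ^ (k + 1) * ihl

lemma qBinomial_add_mul_prod_mul_prod (q : R) (k l : ℕ) :
    qBinomial q (k + l) k * (∏ i ∈ range k, (1 - q ^ (i + 1))) *
      ∏ i ∈ range l, (1 - q ^ (i + 1)) = ∏ i ∈ range (k + l), (1 - q ^ (i + 1)) := by
  rw [qBinomial_add_mul_prod, add_comm k l, prod_range_add, mul_comm]

lemma qBinomial_symm (q : R) {n k l : ℕ} (h : k + l = n) : qBinomial q n k = qBinomial q n l := by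
  subst h
  suffices hX : qBinomial (X : ℤ[X]) (k + l) k = qBinomial X (k + l) l by
    simpa using congrArg (aeval q) hX
  have hP (n : ℕ) : ∏ i ∈ range n, (1 - (X : ℤ[X]) ^ (i + 1)) ≠ 0 :=
    prod_ne_zero_iff.mpr fun i _ h => by simpa using congrArg (eval 0) h
  have hlk := qBinomial_add_mul_prod_mul_prod (X : ℤ[X]) l k
  rw [add_comm l k] at hlk
  refine mul_right_cancel₀ (mul_ne_zero (hP k) (hP l)) ?_
  rw [← mul_assoc, ← mul_assoc, qBinomial_add_mul_prod_mul_prod, mul_right_comm, hlk]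

theorem prod_add_pow_mul_eq_sum_qBinomial (q x y : R) (N : ℕ) :
    ∏ i ∈ range N, (y + q ^ i * x) =
      ∑ p ∈ antidiagonal N, q ^ p.1.choose 2 * qBinomial q N p.1 * x ^ p.1 * y ^ p.2 := by
  induction N generalizing x with
  | zero => simp
  | succ N ih =>
    have hshift : ∀ i, y + q ^ (i + 1) * x = y + q ^ i * (q * x) := fun i => by ring
    have hchoose : ∀ k, (k + 1).choose 2 = k.choose 2 + k := fun k => by
      simp [Nat.choose_succ_succ', add_comm]
    rw [prod_range_succ', pow_zero, one_mul]
    simp_rw [hshift, ih, Nat.sum_antidiagonal_succ, qBinomial_succ_succ, mul_add, add_mul,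
      sum_add_distrib]
    set b : ℕ × ℕ → R := fun p => q ^ p.1.choose 2 * qBinomial q N p.1 * (q * x) ^ p.1 * y ^ p.2
    have hx : (∑ p ∈ antidiagonal N, b p) * x = ∑ p ∈ antidiagonal N,
        q ^ (p.1 + 1).choose 2 * qBinomial q N p.1 * x ^ (p.1 + 1) * y ^ p.2 := by
      rw [sum_mul]
      refine sum_congr rfl fun p _ => ?_
      simp only [b, hchoose]
      ring
    have hy : (∑ p ∈ antidiagonal N, b p) * y = y ^ (N + 1) + ∑ p ∈ antidiagonal N,
        q ^ (p.1 + 1).choose 2 * (q ^ (p.1 + 1) * qBinomial q N (p.1 + 1)) * x ^ (p.1 + 1) *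
          y ^ p.2 := by
      have h := Nat.sum_antidiagonal_succ' (n := N) (f := b)
      rw [Nat.sum_antidiagonal_succ] at h
      simp only [b, qBinomial_eq_zero_of_lt q N.lt_succ_self, mul_zero, zero_mul, zero_add] at h
      calc (∑ p ∈ antidiagonal N, b p) * y = ∑ p ∈ antidiagonal N,
            q ^ p.1.choose 2 * qBinomial q N p.1 * (q * x) ^ p.1 * y ^ (p.2 + 1) := by
            rw [sum_mul]
            exact sum_congr rfl fun p _ => by simp only [b]; ring
        _ = _ := by
            rw [← h, pow_zero, Nat.choose_zero_succ, pow_zero, qBinomial_zero_right, one_mul,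
              one_mul, one_mul]
            congr 1
            exact sum_congr rfl fun p _ => by ring
    rw [hx, hy]
    simp only [Nat.choose_zero_succ, pow_zero, qBinomial_zero_right, mul_one, one_mul]
    abel

end QBinomial

lemma sum_antidiagonal_two_mul_add_one {M : Type*} [AddCommMonoid M] (f : ℕ × ℕ → M) (t : ℕ) :
    ∑ p ∈ antidiagonal (2 * t + 1), f p =
      ∑ p ∈ antidiagonal t, (f (p.1, p.2 + t + 1) + f (p.2 + t + 1, p.1)) := by
  rw [Nat.sum_antidiagonal_eq_sum_range_succ_mk, Nat.sum_antidiagonal_eq_sum_range_succ_mk,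
    sum_add_distrib, Nat.succ_eq_add_one, show 2 * t + 1 + 1 = (t + 1) + (t + 1) by ring,
    sum_range_add]
  congr 1
  · exact sum_congr rfl fun k hk => by rw [mem_range] at hk; congr 2; omega
  · rw [← sum_range_reflect]
    exact sum_congr rfl fun k hk => by rw [mem_range] at hk; congr 2 <;> omega

section Gauss

variable {R : Type*} [CommRing R]

lemma prod_range_pow_add_pow (q : R) (t : ℕ) :
    ∏ i ∈ range (2 * t + 1), (q ^ t + q ^ i) =
      2 * q ^ ((t + 1).choose 2 + t * t) * (∏ i ∈ range t, (1 + q ^ (i + 1))) ^ 2 := by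
  have hlow : ∏ i ∈ range (t + 1), (q ^ t + q ^ i) =
      q ^ (t + 1).choose 2 * ∏ i ∈ range (t + 1), (1 + q ^ i) := by
    calc ∏ i ∈ range (t + 1), (q ^ t + q ^ i)
        = ∏ i ∈ range (t + 1), q ^ i * (1 + q ^ (t + 1 - 1 - i)) :=
          prod_congr rfl fun i hi => by
            rw [mem_range] at hi
            rw [mul_add, mul_one, ← pow_add, show i + (t + 1 - 1 - i) = t by omega, add_comm]
      _ = _ := by
          rw [prod_mul_distrib, prod_pow_eq_pow_sum, sum_range_id, Nat.choose_two_right,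
            prod_range_reflect (fun i => 1 + q ^ i)]
  have hhigh : ∏ i ∈ range t, (q ^ t + q ^ (t + 1 + i)) =
      q ^ (t * t) * ∏ i ∈ range t, (1 + q ^ (i + 1)) := by
    calc ∏ i ∈ range t, (q ^ t + q ^ (t + 1 + i))
        = ∏ i ∈ range t, (q ^ t * (1 + q ^ (i + 1))) := prod_congr rfl fun i _ => by ring
      _ = _ := by rw [prod_mul_distrib, prod_const, card_range, ← pow_mul]
  rw [show 2 * t + 1 = (t + 1) + t by ring, prod_range_add, hlow, hhigh, prod_range_succ',
    pow_zero, one_add_one_eq_two]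
  ring

theorem sq_prod_one_add_pow_eq_sum_of_ne_zero [IsDomain R] [CharZero R] {q : R} (hq : q ≠ 0)
    (t : ℕ) : (∏ i ∈ range t, (1 + q ^ (i + 1))) ^ 2 =
      ∑ p ∈ antidiagonal t, q ^ (p.2 + 1).choose 2 * qBinomial q (2 * t + 1) p.1 := by
  set c := (t + 1).choose 2 + t * t
  refine mul_left_cancel₀ (mul_ne_zero two_ne_zero (pow_ne_zero c hq)) ?_
  calc 2 * q ^ c * (∏ i ∈ range t, (1 + q ^ (i + 1))) ^ 2
      = ∏ i ∈ range (2 * t + 1), (q ^ t + q ^ i * 1) := by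
        simp only [mul_one, prod_range_pow_add_pow, c]
    _ = ∑ p ∈ antidiagonal (2 * t + 1),
          q ^ p.1.choose 2 * qBinomial q (2 * t + 1) p.1 * 1 ^ p.1 * (q ^ t) ^ p.2 :=
        prod_add_pow_mul_eq_sum_qBinomial q 1 (q ^ t) (2 * t + 1)
    _ = _ := by
      rw [sum_antidiagonal_two_mul_add_one, mul_sum]
      refine sum_congr rfl fun ⟨k, j⟩ hkj => ?_
      rw [HasAntidiagonal.mem_antidiagonal] at hkj
      subst hkj
      rw [qBinomial_symm q (show j + (k + j) + 1 + k = 2 * (k + j) + 1 by ring)]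
      have e₁ : k.choose 2 + (k + j) * (j + (k + j) + 1) = c + (j + 1).choose 2 := by
        simp only [c]; qify [Nat.cast_choose_two]; ring
      have e₂ : (j + (k + j) + 1).choose 2 + (k + j) * k = c + (j + 1).choose 2 := by
        simp only [c]; qify [Nat.cast_choose_two]; ring
      simp only [one_pow, mul_one, ← pow_mul]
      linear_combination
        qBinomial q (2 * (k + j) + 1) k * (congrArg (q ^ ·) e₁ + congrArg (q ^ ·) e₂)

theorem sq_prod_one_add_pow_eq_sum (q : R) (t : ℕ) :
    (∏ i ∈ range t, (1 + q ^ (i + 1))) ^ 2 =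
      ∑ p ∈ antidiagonal t, q ^ (p.2 + 1).choose 2 * qBinomial q (2 * t + 1) p.1 := by
  simpa using congrArg (aeval q)
    (sq_prod_one_add_pow_eq_sum_of_ne_zero (X_ne_zero : (X : ℤ[X]) ≠ 0) t)

end Gauss

lemma odd_sq_eq_eight_mul_choose_two_add_one (j : ℕ) :
    (2 * j + 1) ^ 2 = 8 * (j + 1).choose 2 + 1 := by
  qify [Nat.cast_choose_two]
  ring

lemma le_choose_two_succ (j : ℕ) : j ≤ (j + 1).choose 2 := by
  rw [Nat.choose_succ_succ', Nat.choose_one_right]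
  omega

lemma choose_two_succ_injective : Function.Injective fun j : ℕ => (j + 1).choose 2 := by
  intro a b hab
  have h := congrArg (8 * · + 1) hab
  simp only [← odd_sq_eq_eight_mul_choose_two_add_one] at h
  have := Nat.pow_left_injective two_ne_zero h
  omega

lemma ZMod.expand_card_pow {p : ℕ} [Fact p.Prime] (f : (ZMod p)[X]) (k : ℕ) :
    expand (ZMod p) (p ^ k) f = f ^ p ^ k := by
  induction k generalizing f with
  | zero => simp
  | succ k ih => rw [pow_succ, expand_mul, ZMod.expand_card, ih, ← pow_mul, mul_comm]

lemma dvd_prod_one_add_sub_one {R ι : Type*} [CommRing R] {a : R} {s : Finset ι} {b : ι → R}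
    (h : ∀ i ∈ s, a ∣ b i) : a ∣ ∏ i ∈ s, (1 + b i) - 1 := by
  rw [← Ideal.mem_span_singleton, ← Ideal.Quotient.eq, map_prod, map_one]
  refine prod_eq_one fun i hi => ?_
  rw [map_add, map_one, Ideal.Quotient.eq_zero_iff_mem.mpr (Ideal.mem_span_singleton.mpr (h i hi)),
    add_zero]

namespace Polynomial

variable {R : Type*} [CommRing R]

lemma X_pow_dvd_prod_one_add_X_pow_sub_prod {t n : ℕ} (h : t ≤ n) :
    (X : R[X]) ^ (t + 1) ∣
      ∏ i ∈ range n, (1 + X ^ (i + 1)) - ∏ i ∈ range t, (1 + X ^ (i + 1)) := by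
  obtain ⟨n, rfl⟩ := Nat.exists_eq_add_of_le h
  rw [prod_range_add, ← mul_sub_one]
  exact (dvd_prod_one_add_sub_one fun i _ => pow_dvd_pow X (by omega)).mul_left _

section CharTwo

variable [CharP R 2]

lemma X_pow_dvd_qBinomial_mul_prod_sub_one {k l n : ℕ} (hl : k ≤ l) (hn : k ≤ n) :
    (X : R[X]) ^ (k + 1) ∣ qBinomial X (k + l) k * ∏ i ∈ range n, (1 + X ^ (i + 1)) - 1 := by
  have hG : qBinomial X (k + l) k * ∏ i ∈ range k, (1 + X ^ (i + 1)) =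
      ∏ i ∈ range k, (1 + (X : R[X]) ^ (l + i + 1)) := by
    simpa only [CharTwo.sub_eq_add] using qBinomial_add_mul_prod (X : R[X]) k l
  have hk : (X : R[X]) ^ (k + 1) ∣ qBinomial X (k + l) k * ∏ i ∈ range k, (1 + X ^ (i + 1)) - 1 :=
    hG ▸ dvd_prod_one_add_sub_one fun i _ => pow_dvd_pow X (by omega)
  convert dvd_add ((X_pow_dvd_prod_one_add_X_pow_sub_prod hn).mul_left (qBinomial X (k + l) k)) hk
    using 1
  ring

theorem X_pow_dvd_cube_prod_sub_sum {t n : ℕ} (h : t ≤ n) :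
    (X : R[X]) ^ (t + 1) ∣
      (∏ i ∈ range n, (1 + X ^ (i + 1))) ^ 3 - ∑ p ∈ antidiagonal t, X ^ (p.2 + 1).choose 2 := by
  set A : ℕ → R[X] := fun m => ∏ i ∈ range m, (1 + X ^ (i + 1))
  have hsq : (X : R[X]) ^ (t + 1) ∣ A n ^ 2 - A t ^ 2 := by
    rw [sq_sub_sq]
    exact (X_pow_dvd_prod_one_add_X_pow_sub_prod h).mul_left _
  have hterm : ∀ p ∈ antidiagonal t, (X : R[X]) ^ (t + 1) ∣
      X ^ (p.2 + 1).choose 2 * qBinomial X (2 * t + 1) p.1 * A n - X ^ (p.2 + 1).choose 2 := by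
    rintro ⟨k, j⟩ hkj
    rw [HasAntidiagonal.mem_antidiagonal] at hkj
    have hG := X_pow_dvd_qBinomial_mul_prod_sub_one (R := R) (k := k) (l := t + 1 + j) (n := n)
      (by omega) (by omega)
    rw [show k + (t + 1 + j) = 2 * t + 1 by omega] at hG
    calc (X : R[X]) ^ (t + 1) ∣ X ^ (j + 1).choose 2 * X ^ (k + 1) := by
          rw [← pow_add]
          exact pow_dvd_pow X (by have := le_choose_two_succ j; omega)
      _ ∣ X ^ (j + 1).choose 2 * (qBinomial X (2 * t + 1) k * A n - 1) := mul_dvd_mul_left _ hG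
      _ = _ := by ring
  have hsplit : A n ^ 3 - ∑ p ∈ antidiagonal t, X ^ (p.2 + 1).choose 2 =
      (A n ^ 2 - A t ^ 2) * A n + ∑ p ∈ antidiagonal t,
        (X ^ (p.2 + 1).choose 2 * qBinomial X (2 * t + 1) p.1 * A n - X ^ (p.2 + 1).choose 2) := by
    rw [sum_sub_distrib, ← sum_mul, ← sq_prod_one_add_pow_eq_sum (X : R[X]) t]
    ring
  rw [hsplit]
  exact dvd_add (hsq.mul_right _) (dvd_sum hterm)

end CharTwo

theorem coeff_cube_prod_one_add_X_pow_eq_one_iff {t n : ℕ} (h : t ≤ n) :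
    ((∏ i ∈ range n, (1 + X ^ (i + 1)) : (ZMod 2)[X]) ^ 3).coeff t = 1 ↔
      ∃ j, (j + 1).choose 2 = t := by
  have hcoeff :=
    X_pow_dvd_iff.mp (X_pow_dvd_cube_prod_sub_sum (R := ZMod 2) h) t t.lt_succ_self
  rw [coeff_sub, sub_eq_zero, finsetSum_coeff] at hcoeff
  simp only [coeff_X_pow] at hcoeff
  rw [hcoeff]
  constructor
  · intro hsum
    by_contra! hne
    rw [sum_eq_zero fun p _ => if_neg fun ht => hne p.2 ht.symm] at hsum
    exact zero_ne_one hsum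
  · rintro ⟨j, rfl⟩
    have hj := le_choose_two_succ j
    rw [sum_eq_single_of_mem ((j + 1).choose 2 - j, j)
      (by rw [HasAntidiagonal.mem_antidiagonal]; omega), if_pos rfl]
    rintro ⟨k, i⟩ hki hne
    refine if_neg fun hij => hne ?_
    have hi : i = j := choose_two_succ_injective hij.symm
    rw [HasAntidiagonal.mem_antidiagonal] at hki
    rw [Prod.mk.injEq]
    omega

theorem coeff_X_mul_prod_one_sub_X_pow_pow_eq_one_iff (m : ℕ) :
    ((X * ∏ n ∈ range m, (1 - X ^ (n + 1)) ^ 24 : (ZMod 2)[X])).coeff m = 1 ↔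
      ∃ j : ℕ, m = (2 * j + 1) ^ 2 := by
  have hexpand : ∏ n ∈ range m, (1 - X ^ (n + 1)) ^ 24 =
      expand (ZMod 2) (2 ^ 3) ((∏ n ∈ range m, (1 + X ^ (n + 1) : (ZMod 2)[X])) ^ 3) := by
    rw [ZMod.expand_card_pow, prod_pow, ← pow_mul]
    simp only [CharTwo.sub_eq_add]
    norm_num
  rw [hexpand]
  rcases m with _ | M
  · simpa using fun j hj => absurd hj (ne_of_lt (by positivity))
  rw [coeff_X_mul, coeff_expand (by norm_num)]
  split_ifs with h8
  · obtain ⟨t, rfl⟩ := h8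
    rw [Nat.mul_div_cancel_left _ (by norm_num),
      coeff_cube_prod_one_add_X_pow_eq_one_iff (by omega)]
    simp only [odd_sq_eq_eight_mul_choose_two_add_one]
    constructor
    · rintro ⟨j, rfl⟩
      exact ⟨j, by ring⟩
    · rintro ⟨j, hj⟩
      exact ⟨j, by omega⟩
  · simp only [zero_ne_one, false_iff, not_exists]
    intro j hj
    rw [odd_sq_eq_eight_mul_choose_two_add_one] at hj
    exact h8 ⟨(j + 1).choose 2, by omega⟩

end Polynomial

open PowerSeries

/-- The coefficient of `q^m` in `q · ∏_{n=1}^∞ (1 - q^n)^24` is odd if and only if `m` is an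
odd square.  (The infinite product is captured by the truncation `∏_{n=1}^m`, since factors
`(1 - q^n)` with `n > m` do not affect the coefficient of `q^m`.) -/
theorem tau_odd_iff_odd_square (m : ℕ) :
    Odd ((PowerSeries.coeff (R := ℤ) m)
        (PowerSeries.X * ∏ n ∈ Finset.range m, (1 - PowerSeries.X ^ (n + 1)) ^ 24)) ↔
      ∃ j : ℕ, m = (2 * j + 1) ^ 2 := by
  have hpoly : (PowerSeries.X * ∏ n ∈ range m, (1 - PowerSeries.X ^ (n + 1)) ^ 24 : ℤ⟦X⟧) =
      ((Polynomial.X * ∏ n ∈ range m, (1 - Polynomial.X ^ (n + 1)) ^ 24 : ℤ[X]) : ℤ⟦X⟧) := by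
    rw [← Polynomial.coeToPowerSeries.ringHom_apply, map_mul, map_prod]
    simp
  rw [hpoly, Polynomial.coeff_coe, ← ZMod.intCast_eq_one_iff_odd,
    ← eq_intCast (Int.castRingHom (ZMod 2)), ← Polynomial.coeff_map,
    ← Polynomial.coeff_X_mul_prod_one_sub_X_pow_pow_eq_one_iff]
  simp [Polynomial.map_prod]
end

section
/- For every integer k ≥ 1 and every b with 1 ≤ b ≤ 21 and b ∈ {2,4,6,7,8,9,10,11,12,13,14,15,16,17,18,19,20,21}: if τ satisfies Ramanujan's mod-23 congruences (τ(p) ≡ 0, 2, or -1 (mod 23) for p ≠ 23, according to the three cases, with p^{11} ≡ (p|23) (mod 23)) and the Hecke recurrence, and if τ(p^{2k}) ≡ b (mod 23) for some prime p ≠ 23, then 2k+1 ≡ b (mod 23); in particular k ≥ 3 when b ∉ {3,5,0,1,22}. -/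
private lemma tau_pow_cong (τ : ℕ → ℤ) (p : ℕ)
    (h1 : τ (p ^ 0) = 1 ∧ τ (p ^ 1) = τ p)
    (hrec : ∀ k : ℕ, 2 ≤ k →
      τ (p ^ k) = τ p * τ (p ^ (k - 1)) - (p : ℤ) ^ 11 * τ (p ^ (k - 2)))
    (t e : ℤ) (ht : τ p ≡ t [ZMOD 23]) (he : (p : ℤ) ^ 11 ≡ e [ZMOD 23])
    (f : ℕ → ℤ) (hf0 : f 0 = 1) (hf1 : f 1 = t)
    (hf : ∀ m, f (m + 2) ≡ t * f (m + 1) - e * f m [ZMOD 23]) :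
    ∀ m, τ (p ^ m) ≡ f m [ZMOD 23] := by
  have key : ∀ m, τ (p ^ m) ≡ f m [ZMOD 23] ∧ τ (p ^ (m + 1)) ≡ f (m + 1) [ZMOD 23] := by
    intro m
    induction m with
    | zero =>
      refine ⟨?_, ?_⟩
      · rw [h1.1, hf0]
      · rw [h1.2, hf1]; exact ht
    | succ n ih =>
      refine ⟨ih.2, ?_⟩
      have hr := hrec (n + 2) (by omega)
      have e1 : n + 2 - 1 = n + 1 := by omega
      have e2 : n + 2 - 2 = n := by omega
      rw [e1, e2] at hr
      rw [hr]
      exact ((ht.mul ih.2).sub (he.mul ih.1)).trans (hf n).symm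
  exact fun m => (key m).1

/-- If `τ` satisfies the Hecke recurrence and Ramanujan's mod-23 congruences (for each prime
`p ≠ 23`, either `τ(p) ≡ 0` and `p^{11} ≡ -1`, or `τ(p) ≡ 2` and `p^{11} ≡ 1`, or
`τ(p) ≡ -1` and `p^{11} ≡ 1 (mod 23)`), and if
`b ∈ {2,4,6,7,8,9,10,11,12,13,14,15,16,17,18,19,20,21}` and `τ(p^{2k}) ≡ b (mod 23)` for
some prime `p ≠ 23`, then `2k + 1 ≡ b (mod 23)`; in particular `k ≥ 3`. -/
theorem tau_pow_mod23_progression (τ : ℕ → ℤ)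
    (h1 : ∀ p : ℕ, p.Prime → τ (p ^ 0) = 1 ∧ τ (p ^ 1) = τ p)
    (hrec : ∀ p : ℕ, p.Prime → ∀ k : ℕ, 2 ≤ k →
      τ (p ^ k) = τ p * τ (p ^ (k - 1)) - (p : ℤ) ^ 11 * τ (p ^ (k - 2)))
    (hcases : ∀ p : ℕ, p.Prime → p ≠ 23 →
      (τ p ≡ 0 [ZMOD 23] ∧ (p : ℤ) ^ 11 ≡ -1 [ZMOD 23]) ∨
      (τ p ≡ 2 [ZMOD 23] ∧ (p : ℤ) ^ 11 ≡ 1 [ZMOD 23]) ∨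
      (τ p ≡ -1 [ZMOD 23] ∧ (p : ℤ) ^ 11 ≡ 1 [ZMOD 23]))
    (b : ℤ)
    (hb : b ∈ ({2, 4, 6, 7, 8, 9, 10, 11, 12, 13, 14, 15, 16, 17, 18, 19, 20, 21} : Set ℤ))
    (p : ℕ) (hp : p.Prime) (hp23 : p ≠ 23) (k : ℕ)
    (hcong : τ (p ^ (2 * k)) ≡ b [ZMOD 23]) :
    (2 * (k : ℤ) + 1 ≡ b [ZMOD 23]) ∧ 3 ≤ k := by
  simp only [Set.mem_insert_iff, Set.mem_singleton_iff] at hb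
  rcases hcases p hp hp23 with ⟨ht, he⟩ | ⟨ht, he⟩ | ⟨ht, he⟩
  · -- τ p ≡ 0, p^11 ≡ -1 : τ(p^{2k}) ≡ 1, contradiction
    have main := tau_pow_cong τ p (h1 p hp) (hrec p hp) 0 (-1) ht he
      (fun m => if Even m then 1 else 0) (by simp) (by simp) ?_ (2 * k)
    · exfalso
      have h2k : (if Even (2 * k) then (1:ℤ) else 0) = 1 := by
        simp [Nat.even_mul]
      rw [h2k] at main
      have hd := (main.symm.trans hcong).dvd
      omega
    · intro m
      show (if Even (m + 2) then (1:ℤ) else 0)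
          ≡ 0 * (if Even (m + 1) then (1:ℤ) else 0)
            - (-1) * (if Even m then (1:ℤ) else 0) [ZMOD 23]
      have hiff : Even (m + 2) ↔ Even m := by simp [Nat.even_add]
      have heq : (if Even (m + 2) then (1:ℤ) else 0)
          = 0 * (if Even (m + 1) then (1:ℤ) else 0)
            - (-1) * (if Even m then (1:ℤ) else 0) := by
        rcases em (Even m) with h | h <;> simp [hiff, h]
      rw [heq]
  · -- τ p ≡ 2, p^11 ≡ 1 : τ(p^m) ≡ m+1
    have main := tau_pow_cong τ p (h1 p hp) (hrec p hp) 2 1 ht he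
      (fun m => (m : ℤ) + 1) (by simp) (by norm_num) ?_ (2 * k)
    · have hbc : 2 * (k : ℤ) + 1 ≡ b [ZMOD 23] := by
        have : ((2 * k : ℕ) : ℤ) + 1 = 2 * (k : ℤ) + 1 := by push_cast; ring
        rw [this] at main
        exact main.symm.trans hcong
      refine ⟨hbc, ?_⟩
      by_contra hk
      have hd := hbc.dvd
      omega
    · intro m
      show ((m + 2 : ℕ) : ℤ) + 1 ≡ 2 * (((m + 1 : ℕ) : ℤ) + 1) - 1 * ((m : ℤ) + 1) [ZMOD 23]
      have heq : ((m + 2 : ℕ) : ℤ) + 1 = 2 * (((m + 1 : ℕ) : ℤ) + 1) - 1 * ((m : ℤ) + 1) := by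
        push_cast; ring
      rw [heq]
  · -- τ p ≡ -1, p^11 ≡ 1 : τ(p^m) ≡ 1, -1, 0 per m % 3, contradiction
    have main := tau_pow_cong τ p (h1 p hp) (hrec p hp) (-1) 1 ht he
      (fun m => if m % 3 = 0 then 1 else if m % 3 = 1 then -1 else 0) (by simp) (by norm_num) ?_ (2 * k)
    · exfalso
      have h3 : 2 * k % 3 = 0 ∨ 2 * k % 3 = 1 ∨ 2 * k % 3 = 2 := by omega
      rcases h3 with h | h | h <;> rw [h] at main <;> norm_num at main <;>
        · have hd := (main.symm.trans hcong).dvd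
          omega
    · intro m
      show (if (m + 2) % 3 = 0 then (1:ℤ) else if (m + 2) % 3 = 1 then -1 else 0)
          ≡ (-1) * (if (m + 1) % 3 = 0 then (1:ℤ) else if (m + 1) % 3 = 1 then -1 else 0)
            - 1 * (if m % 3 = 0 then (1:ℤ) else if m % 3 = 1 then -1 else 0) [ZMOD 23]
      have h3 : m % 3 = 0 ∨ m % 3 = 1 ∨ m % 3 = 2 := by omega
      rcases h3 with h | h | h <;>
        · have e1 : (m + 1) % 3 = (m % 3 + 1) % 3 := by omega
          have e2 : (m + 2) % 3 = (m % 3 + 2) % 3 := by omega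
          rw [e1, e2, h]
          norm_num
end
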